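/- Let f : ℂ → ℂ be a non-constant polynomial function. Then for every r > 0 and every ε > 0 there exists R > 0 such that for every (x,y) ∈ ℂ² with max{|x|,|y|} ≥ R, the Gaussian measure of the set {t ∈ ℂ : |x + t·f(y)| < r} is less than ε. (That is, the family of maps π_t(x,y) = x + t·f(y), parametrized by t in ℂ with the Gaussian measure, is a spreading family.) -/

import Mathlib

/-! If `‖y‖` is large then so is `‖f y‖`, and `{t | ‖x + t * f y‖ < r}` lies in a disc of radius
`r / ‖f y‖`, whose Gaussian measure is at most `(2π)⁻¹` times its area. If `‖y‖` stays bounded,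
then `‖f y‖ ≤ M` and `‖x‖` must be large, so every `t` in the set has `‖t‖ > (‖x‖ - r) / M`, and
the Gaussian tail beyond that radius is small. -/

open MeasureTheory Polynomial

/-- The standard Gaussian probability measure on ℂ ≅ ℝ²:
    γ(U) = (1/(2π)) ∫_U e^{−|w|²/2} dλ(w). -/
noncomputable def gaussianMeasureC : Measure ℂ :=
  MeasureTheory.volume.withDensity
    (fun w => ENNReal.ofReal ((2 * Real.pi)⁻¹ * Real.exp (-(‖w‖) ^ 2 / 2)))

open Filter Metric Real Bornology
open scoped ENNReal Topology

section NormedField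

variable {𝕜 : Type*} [NormedField 𝕜]

lemma setOf_norm_add_mul_lt_subset_ball (x : 𝕜) {a : 𝕜} (ha : a ≠ 0) (r : ℝ) :
    {t : 𝕜 | ‖x + t * a‖ < r} ⊆ ball (-x / a) (r / ‖a‖) := by
  intro t ht
  have hxa : (t - -x / a) * a = x + t * a := by field_simp; ring
  rwa [mem_ball, dist_eq_norm, lt_div_iff₀ (norm_pos_iff.2 ha), ← norm_mul, hxa]

lemma setOf_norm_add_mul_lt_subset (x a : 𝕜) (r : ℝ) :
    {t : 𝕜 | ‖x + t * a‖ < r} ⊆ {t | ‖x‖ - r < ‖t‖ * ‖a‖} := by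
  intro t (ht : ‖x + t * a‖ < r)
  have hx : ‖x‖ ≤ ‖x + t * a‖ + ‖t‖ * ‖a‖ := by
    simpa [norm_mul] using norm_sub_le (x + t * a) (t * a)
  show ‖x‖ - r < ‖t‖ * ‖a‖
  linarith

end NormedField

section Spreading

variable {μ : Measure ℂ} {C : ℝ≥0∞}

lemma measure_setOf_norm_add_mul_lt_le (hμ : μ ≤ C • volume) (x : ℂ) {a : ℂ} (ha : a ≠ 0)
    {r : ℝ} (hr : 0 ≤ r) : μ {t | ‖x + t * a‖ < r} ≤ C * ENNReal.ofReal (π * (r / ‖a‖) ^ 2) := by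
  calc μ {t | ‖x + t * a‖ < r} ≤ μ (ball (-x / a) (r / ‖a‖)) :=
        measure_mono (setOf_norm_add_mul_lt_subset_ball x ha r)
    _ ≤ C * volume (ball (-x / a) (r / ‖a‖)) := hμ _
    _ ≤ C * ENNReal.ofReal (π * (r / ‖a‖) ^ 2) := by
        rw [Complex.volume_ball, ← ENNReal.ofReal_pow (by positivity), ← NNReal.coe_real_pi,
          ENNReal.ofReal_mul NNReal.pi.coe_nonneg, ENNReal.ofReal_coe_nnreal,
          mul_comm (ENNReal.ofReal _)]

lemma eventually_forall_measure_setOf_norm_add_mul_eval_lt (hC : C ≠ ∞) (hμ : μ ≤ C • volume)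
    {p : ℂ[X]} (hp : 0 < p.degree) {r : ℝ} (hr : 0 ≤ r) {ε : ℝ≥0∞} (hε : 0 < ε) :
    ∀ᶠ y in comap norm atTop, ∀ x, μ {t | ‖x + t * p.eval y‖ < r} < ε := by
  have hbound : Tendsto (fun s : ℝ => C * ENNReal.ofReal (π * (r / s) ^ 2)) atTop (𝓝 0) := by
    have hrs : Tendsto (fun s : ℝ => π * (r / s) ^ 2) atTop (𝓝 0) := by
      simpa using ((tendsto_const_nhds.div_atTop tendsto_id).pow 2).const_mul π
    simpa using ENNReal.Tendsto.const_mul (ENNReal.tendsto_ofReal hrs) (Or.inr hC)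
  have hpoly := p.tendsto_norm_atTop hp (tendsto_comap : Tendsto (norm : ℂ → ℝ) _ atTop)
  filter_upwards [hpoly.eventually (hbound.eventually_lt_const hε),
    hpoly.eventually_gt_atTop 0] with y hy hpos x
  exact (measure_setOf_norm_add_mul_lt_le hμ x (norm_pos_iff.1 hpos) hr).trans_lt hy

lemma exists_forall_measure_setOf_norm_add_mul_lt_lt [IsFiniteMeasure μ] {K : Set ℂ}
    (hK : IsBounded K) (r : ℝ) {ε : ℝ≥0∞} (hε : 0 < ε) :
    ∃ R, ∀ x : ℂ, ∀ a ∈ K, R ≤ ‖x‖ → μ {t | ‖x + t * a‖ < r} < ε := by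
  obtain ⟨M, hM0, hM⟩ := hK.exists_pos_norm_le
  have htail := tendsto_measure_compl_closedBall_of_isTightMeasureSet
    (isTightMeasureSet_singleton (μ := μ)) 0
  simp only [Set.mem_singleton_iff, iSup_iSup_eq_left] at htail
  obtain ⟨T, hT⟩ := (htail.eventually_lt_const hε).exists
  refine ⟨T * M + r, fun x a ha hx => (measure_mono fun t ht => ?_).trans_lt hT⟩
  have hlow : ‖x‖ - r < ‖t‖ * ‖a‖ := setOf_norm_add_mul_lt_subset x a r ht
  have haM := hM a ha
  rw [Set.mem_compl_iff, mem_closedBall_zero_iff, not_le]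
  nlinarith [norm_nonneg t]

theorem exists_forall_measure_setOf_norm_add_mul_eval_lt [IsFiniteMeasure μ] (hC : C ≠ ∞)
    (hμ : μ ≤ C • volume) {p : ℂ[X]} (hp : 0 < p.degree) {r : ℝ} (hr : 0 ≤ r) {ε : ℝ≥0∞}
    (hε : 0 < ε) :
    ∃ R > 0, ∀ x y : ℂ, R ≤ max ‖x‖ ‖y‖ → μ {t | ‖x + t * p.eval y‖ < r} < ε := by
  obtain ⟨A, -, hA⟩ := ((atTop_basis.comap norm).eventually_iff).1
    (eventually_forall_measure_setOf_norm_add_mul_eval_lt hC hμ hp hr hε)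
  obtain ⟨R, hR⟩ := exists_forall_measure_setOf_norm_add_mul_lt_lt (μ := μ)
    ((isCompact_closedBall (0 : ℂ) A).image p.continuous).isBounded r hε
  refine ⟨max (max A R) 1, by positivity, fun x y hxy => ?_⟩
  by_cases hy : A ≤ ‖y‖
  · exact hA hy x
  · refine hR x _ (Set.mem_image_of_mem _ (mem_closedBall_zero_iff.2 (not_le.1 hy).le)) ?_
    grind [le_max_iff, max_le_iff]

end Spreading

lemma gaussianMeasureC_le_smul_volume :
    gaussianMeasureC ≤ ENNReal.ofReal (2 * π)⁻¹ • volume := by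
  rw [gaussianMeasureC, ← withDensity_const]
  refine withDensity_mono (ae_of_all _ fun w => ENNReal.ofReal_le_ofReal ?_)
  exact mul_le_of_le_one_right (by positivity) (exp_le_one_iff.2 (by nlinarith [sq_nonneg ‖w‖]))

instance : IsFiniteMeasure gaussianMeasureC := by
  refine isFiniteMeasure_withDensity_ofReal (Integrable.hasFiniteIntegral ?_)
  have h := (GaussianFourier.integrable_cexp_neg_mul_sq_norm_add (V := ℂ) (b := 1 / 2)
    (by norm_num) 0 0).norm.const_mul (2 * π)⁻¹
  refine h.congr (ae_of_all _ fun w => ?_)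
  simp [Complex.norm_exp, ← Complex.ofReal_pow, neg_div, inv_mul_eq_div]

theorem stmt11 (f : ℂ → ℂ) (p : Polynomial ℂ) (hp : 0 < p.natDegree)
    (hf : ∀ z : ℂ, f z = p.eval z) :
    ∀ r : ℝ, 0 < r → ∀ ε : ℝ, 0 < ε → ∃ R : ℝ, 0 < R ∧
      ∀ x y : ℂ, R ≤ max ‖x‖ ‖y‖ →
        gaussianMeasureC {t : ℂ | ‖x + t * f y‖ < r} < ENNReal.ofReal ε := by
  intro r hr ε hε
  obtain rfl : f = fun z => p.eval z := funext hf
  exact exists_forall_measure_setOf_norm_add_mul_eval_lt ENNReal.ofReal_ne_top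
    gaussianMeasureC_le_smul_volume (natDegree_pos_iff_degree_pos.1 hp) hr.le
    (ENNReal.ofReal_pos.2 hε)
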